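/- Let S be a finite band. Then the semigroup T = Σ(C(S)) is itself self-automaton: the map t ↦ t̄ from T to the Cayley automaton state maps of T (acting on nonempty words over T) is injective and satisfies t₁t₂‾ = t̄₁ ∘ t̄₂ for all t₁, t₂ ∈ T. -/
import Mathlib


/-- The Cayley automaton state map: `cayley s` sends the word
`α₁α₂⋯αₙ` to `(sα₁)(sα₁α₂)⋯(sα₁α₂⋯αₙ)`. -/
def cayley {S : Type*} [Mul S] (s : S) : List S → List S
  | [] => []
  | a :: α => (s * a) :: cayley (s * a) α

/-- `S` is self-automaton if `s ↦ s̄` is injective and a homomorphism. -/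
def SelfAutomaton (S : Type*) [Mul S] : Prop :=
  Function.Injective (cayley (S := S)) ∧
    ∀ s t : S, cayley (s * t) = cayley s ∘ cayley t

/-- `S` is self-dual if it admits an anti-automorphism. -/
def SelfDual (S : Type*) [Mul S] : Prop :=
  ∃ φ : S ≃ S, ∀ x y : S, φ (x * y) = φ y * φ x

/-- `Σ(C(S))`: the subsemigroup of maps on words, under composition,
generated by the Cayley automaton state maps. -/
def SigmaC (S : Type*) [Mul S] : Subsemigroup (Function.End (List S)) :=
  Subsemigroup.closure (Set.range (cayley : S → Function.End (List S)))

section BandLemmas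

variable {S : Type*} [Semigroup S]

lemma cayley_cons (s a : S) (α : List S) :
    cayley s (a :: α) = (s * a) :: cayley (s * a) α := rfl

lemma cayley_absorb (hb : ∀ b : S, b * b = b) :
    ∀ (α : List S) (x v : S), cayley (x * v) (cayley v α) = cayley (x * v) α
  | [], _, _ => rfl
  | a :: α, x, v => by
    have h1 : x * v * (v * a) = x * v * a := by
      have : x * v * (v * a) = x * (v * v) * a := by simp [mul_assoc]
      rw [this, hb]
    rw [cayley_cons, cayley_cons, cayley_cons, h1]
    congr 1
    have := cayley_absorb hb α x (v * a)
    rwa [← mul_assoc] at this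

lemma cayley_mul_comp (hb : ∀ b : S, b * b = b) (s t : S) :
    cayley (s * t) = cayley s ∘ cayley t := by
  funext β
  cases β with
  | nil => rfl
  | cons a α =>
    show (s * t * a) :: cayley (s * t * a) α
        = (s * (t * a)) :: cayley (s * (t * a)) (cayley (t * a) α)
    rw [cayley_absorb hb, mul_assoc]

lemma cayley_mul_cons (hb : ∀ b : S, b * b = b) (x a : S) (α : List S) :
    cayley (x * a) (a :: α) = cayley x (a :: α) := by
  show (x * a * a) :: cayley (x * a * a) α = (x * a) :: cayley (x * a) α
  rw [mul_assoc, hb]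

end BandLemmas

theorem sigmaC_of_band_selfAutomaton {S : Type*} [Semigroup S] [Finite S]
    (hband : ∀ b : S, b * b = b) :
    SelfAutomaton ↥(SigmaC S) := by
  -- every element of SigmaC S is a cayley map
  have hmem : ∀ f ∈ SigmaC S, ∃ x : S, cayley x = f := by
    intro f hf
    induction hf using Subsemigroup.closure_induction with
    | mem f hf => exact hf
    | mul f g _ _ hf hg =>
      obtain ⟨x, rfl⟩ := hf
      obtain ⟨y, rfl⟩ := hg
      exact ⟨x * y, by rw [cayley_mul_comp hband]; rfl⟩
  -- SigmaC S is a band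
  have hband' : ∀ t : ↥(SigmaC S), t * t = t := by
    intro t
    obtain ⟨x, hx⟩ := hmem t t.2
    apply Subtype.ext
    show (t : Function.End (List S)) * (t : Function.End (List S)) = t
    rw [← hx]
    show cayley x ∘ cayley x = cayley x
    rw [← cayley_mul_comp hband, hband]
  constructor
  · -- injectivity
    intro s t h
    obtain ⟨x, hx⟩ := hmem s s.2
    obtain ⟨y, hy⟩ := hmem t t.2
    have h1 : ∀ a : ↥(SigmaC S), s * a = t * a := by
      intro a
      have := congrFun h [a]
      simpa [cayley] using this
    have h2 : ∀ z : S, cayley (x * z) = (cayley (y * z) : List S → List S) := by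
      intro z
      have hz : (cayley z : Function.End (List S)) ∈ SigmaC S :=
        Subsemigroup.subset_closure ⟨z, rfl⟩
      set cz : Function.End (List S) := cayley z with hcz
      have hval := congrArg Subtype.val (h1 ⟨cz, hz⟩)
      have hval' : (s : Function.End (List S)) * cz
          = (t : Function.End (List S)) * cz := hval
      rw [← hx, ← hy] at hval'
      calc cayley (x * z) = cayley x ∘ cayley z := cayley_mul_comp hband x z
        _ = cayley y ∘ cayley z := hval'
        _ = cayley (y * z) := (cayley_mul_comp hband y z).symm
    have h3 : cayley x = (cayley y : List S → List S) := by
      funext β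
      cases β with
      | nil => rfl
      | cons a α =>
        rw [← cayley_mul_cons hband x a α, ← cayley_mul_cons hband y a α, h2 a]
    apply Subtype.ext
    rw [← hx, ← hy, h3]
  · exact fun s t => cayley_mul_comp hband' s t
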